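/- arXiv:2306.08755 — 6 statements merged into one kernel-verified Lean document; each statement's English description precedes it below -/
import Mathlib

section
/- Let a, b, c, τ, ω be real numbers with bc ≠ 0 and ω > 0, and suppose 2bc·cos(ωτ) + b² + c² = ω² + a². Then there exists σ ∈ [0, 2π/ω) such that, setting r = τ + σ, the pair of equations a = −b·cos(ωr) − c·cos(ωσ) and ω = b·sin(ωr) + c·sin(ωσ) holds. -/
/-!
With θ = ωσ, the two real equations are the real and imaginary parts of the single complex
equation `(b e^{iωτ} + c) e^{iθ} = -a + iω`. The hypothesis says exactly that `b e^{iωτ} + c`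
and `-a + iω` have the same modulus, which is nonzero since `ω > 0`; so a rotation `e^{iθ}`
with `θ ∈ [0, 2π)` carries the first to the second.
-/

open Complex Set

lemma exists_mem_Ico_mul_exp_mul_I_eq {w z : ℂ} (hw : w ≠ 0) (hwz : ‖w‖ = ‖z‖) :
    ∃ θ ∈ Ico (0 : ℝ) (2 * Real.pi), w * exp (θ * I) = z := by
  have hperiodic : Function.Periodic (fun θ : ℝ => exp (θ * I)) (2 * Real.pi) := fun θ => by
    simpa using exp_mul_I_periodic (θ : ℂ)
  obtain ⟨θ, hθ, hexp⟩ := hperiodic.exists_mem_Ico₀ Real.two_pi_pos (z / w).arg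
  have hunit : ‖z / w‖ = 1 := by
    rw [norm_div, ← hwz, div_self (norm_ne_zero_iff.mpr hw)]
  refine ⟨θ, hθ, ?_⟩
  calc w * exp (θ * I) = w * (‖z / w‖ * exp ((z / w).arg * I)) := by
        rw [hunit, ofReal_one, one_mul, hexp]
    _ = z := by rw [norm_mul_exp_arg_mul_I, mul_div_cancel₀ _ hw]

lemma sq_norm_ofReal_mul_exp_mul_I_add_ofReal (b c t : ℝ) :
    ‖(b : ℂ) * exp (t * I) + c‖ ^ 2 = 2 * b * c * Real.cos t + b ^ 2 + c ^ 2 := by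
  rw [Complex.sq_norm, normSq_apply]
  simp only [add_re, add_im, re_ofReal_mul, im_ofReal_mul, exp_ofReal_mul_I_re,
    exp_ofReal_mul_I_im, ofReal_re, ofReal_im]
  linear_combination b ^ 2 * Real.sin_sq_add_cos_sq t

theorem stmt_1_general (a b c τ ω : ℝ) (hω : 0 < ω)
    (h : 2 * b * c * Real.cos (ω * τ) + b ^ 2 + c ^ 2 = ω ^ 2 + a ^ 2) :
    ∃ σ ∈ Set.Ico (0 : ℝ) (2 * Real.pi / ω),
      a = -b * Real.cos (ω * (τ + σ)) - c * Real.cos (ω * σ) ∧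
      ω = b * Real.sin (ω * (τ + σ)) + c * Real.sin (ω * σ) := by
  set z : ℂ := (-a : ℝ) + ω * I
  have hz : z ≠ 0 := fun h0 => hω.ne' (by simpa [z] using congrArg im h0)
  have hnorm : ‖(b : ℂ) * exp ((ω * τ : ℝ) * I) + c‖ = ‖z‖ := by
    rw [← sq_eq_sq₀ (norm_nonneg _) (norm_nonneg _), sq_norm_ofReal_mul_exp_mul_I_add_ofReal, h,
      Complex.sq_norm, normSq_add_mul_I, neg_sq, add_comm]
  obtain ⟨θ, hθ, hrot⟩ := exists_mem_Ico_mul_exp_mul_I_eq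
    (norm_ne_zero_iff.mp (hnorm ▸ norm_ne_zero_iff.mpr hz)) hnorm
  have hsum : (b : ℂ) * exp ((ω * τ + θ : ℝ) * I) + c * exp (θ * I) = z := by
    rw [← hrot, ofReal_add, add_mul, exp_add]; ring
  have hr : ω * (τ + θ / ω) = ω * τ + θ := by field_simp
  have hσ : ω * (θ / ω) = θ := by field_simp
  refine ⟨θ / ω, ⟨div_nonneg hθ.1 hω.le, div_lt_div_of_pos_right hθ.2 hω⟩, ?_, ?_⟩
  · have hre := congrArg re hsum
    simp only [add_re, re_ofReal_mul, exp_ofReal_mul_I_re, z, ofReal_re, mul_I_re, ofReal_im] at hre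
    rw [hr, hσ]; linarith
  · have him := congrArg im hsum
    simp only [add_im, im_ofReal_mul, exp_ofReal_mul_I_im, z, ofReal_im, mul_I_im, ofReal_re] at him
    rw [hr, hσ]; linarith

theorem stmt_1 (a b c τ ω : ℝ) (hbc : b * c ≠ 0) (hω : 0 < ω)
    (h : 2 * b * c * Real.cos (ω * τ) + b ^ 2 + c ^ 2 = ω ^ 2 + a ^ 2) :
    ∃ σ ∈ Set.Ico (0 : ℝ) (2 * Real.pi / ω),
      a = -b * Real.cos (ω * (τ + σ)) - c * Real.cos (ω * σ) ∧
      ω = b * Real.sin (ω * (τ + σ)) + c * Real.sin (ω * σ) :=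
  stmt_1_general a b c τ ω hω h
end

section
/- Let bc > 0, |a| < |b − c|, set ω₁ = √((b−c)² − a²), and let τ be a real number with |τ| < ω₁/(bc). If ω* ≥ ω₁ is a solution of cos(ω*τ) = (ω*)²/(2bc) + (a² − b² − c²)/(2bc), then ω*/(bc) ≠ −τ·sin(ω*τ); i.e., the tangency condition ω*/(bc) = −τ·sin(ω*τ) is impossible. -/
theorem stmt_5 (a b c τ ω : ℝ) (hbc : 0 < b * c) (ha : |a| < |b - c|)
    (hτ : |τ| < Real.sqrt ((b - c) ^ 2 - a ^ 2) / (b * c))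
    (hω : Real.sqrt ((b - c) ^ 2 - a ^ 2) ≤ ω)
    (hroot : Real.cos (ω * τ) = ω ^ 2 / (2 * b * c) + (a ^ 2 - b ^ 2 - c ^ 2) / (2 * b * c)) :
    ω / (b * c) ≠ -τ * Real.sin (ω * τ) := by
  intro h
  have hs : |Real.sin (ω * τ)| ≤ 1 := Real.abs_sin_le_one _
  have h1 : |(-τ) * Real.sin (ω * τ)| ≤ |τ| := by
    rw [abs_mul, abs_neg]
    calc |τ| * |Real.sin (ω * τ)| ≤ |τ| * 1 :=
          mul_le_mul_of_nonneg_left hs (abs_nonneg _)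
      _ = |τ| := mul_one _
  have h2 : ω / (b * c) ≤ |τ| := by rw [h]; exact le_trans (le_abs_self _) h1
  have h3 : Real.sqrt ((b - c) ^ 2 - a ^ 2) / (b * c) ≤ ω / (b * c) := by gcongr
  linarith
end

section
/- Let b, c be real with bc < 0, and let a be real with |a| < |b + c|. Set ω₁ = √((b+c)² − a²) and g(ω) = ω²/(2bc) + (a² − b² − c²)/(2bc). Then g is strictly decreasing on [0, ∞), g(0) > 1, and for every real τ with |τ| < ω₁/|bc|, any solution ω ∈ [ω₁, ω₂] of g(ω) = cos(ωτ) (where ω₂ = √((b−c)² − a²)) satisfies |τ·sin(τω)| < ω/|bc|, so the tangency condition ω/(bc) = −τ·sin(ωτ) fails. -/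
theorem stmt_6 (a b c : ℝ) (hbc : b * c < 0) (ha : |a| < |b + c|) :
    let g : ℝ → ℝ := fun ω => ω ^ 2 / (2 * b * c) + (a ^ 2 - b ^ 2 - c ^ 2) / (2 * b * c)
    let ω₁ : ℝ := Real.sqrt ((b + c) ^ 2 - a ^ 2)
    let ω₂ : ℝ := Real.sqrt ((b - c) ^ 2 - a ^ 2)
    StrictAntiOn g (Set.Ici 0) ∧ 1 < g 0 ∧
    ∀ τ : ℝ, |τ| < ω₁ / |b * c| →
      ∀ ω ∈ Set.Icc ω₁ ω₂, g ω = Real.cos (ω * τ) →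
        |τ * Real.sin (τ * ω)| < ω / |b * c| ∧ ω / (b * c) ≠ -τ * Real.sin (ω * τ) := by
  intro g ω₁ ω₂
  have h2 : 2 * b * c < 0 := by linarith
  have ha2 : a ^ 2 < (b + c) ^ 2 := by
    have := sq_abs a; have := sq_abs (b + c)
    nlinarith [abs_nonneg a]
  refine ⟨?_, ?_, ?_⟩
  · intro x hx y hy hxy
    have hx2 : x ^ 2 < y ^ 2 := by nlinarith [Set.mem_Ici.mp hx]
    have : y ^ 2 / (2 * b * c) < x ^ 2 / (2 * b * c) :=
      (div_lt_div_right_of_neg h2).mpr hx2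
    simpa [g] using add_lt_add_right this ((a ^ 2 - b ^ 2 - c ^ 2) / (2 * b * c))
  · have : g 0 = (a ^ 2 - b ^ 2 - c ^ 2) / (2 * b * c) := by simp [g]
    rw [this, one_lt_div_of_neg h2]
    nlinarith
  · intro τ hτ ω hω _
    have hω₁ : (0:ℝ) ≤ ω₁ := Real.sqrt_nonneg _
    have hω0 : 0 ≤ ω := le_trans hω₁ hω.1
    have habs : |b * c| > 0 := abs_pos.mpr (ne_of_lt hbc)
    have key : |τ * Real.sin (τ * ω)| < ω / |b * c| := by
      calc |τ * Real.sin (τ * ω)| = |τ| * |Real.sin (τ * ω)| := abs_mul _ _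
        _ ≤ |τ| * 1 := by
            exact mul_le_mul_of_nonneg_left (Real.abs_sin_le_one _) (abs_nonneg _)
        _ = |τ| := mul_one _
        _ < ω₁ / |b * c| := hτ
        _ ≤ ω / |b * c| := by
            exact div_le_div_of_nonneg_right hω.1 habs.le
    refine ⟨key, ?_⟩
    intro heq
    have : |ω / (b * c)| = ω / |b * c| := by
      rw [abs_div, abs_of_nonneg hω0]
    rw [heq] at this
    have h3 : |(-τ * Real.sin (ω * τ))| = |τ * Real.sin (τ * ω)| := by
      rw [mul_comm ω τ]; simp [abs_mul]
    rw [h3] at this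
    linarith [key, this.ge, this.le]
end

section
/- Let a, b, c be real numbers with a + b + c > 0 and bc > 0, and suppose |a| > |b + c|. Then the characteristic function h(λ) = λ + a + b·e^{−λr} + c·e^{−λσ} has no purely imaginary zero λ = iω with ω ≠ 0, for any delays r ≥ 0 and σ ≥ 0. -/
theorem stmt_7 (a b c : ℝ) (hsum : 0 < a + b + c) (hbc : 0 < b * c)
    (ha : |a| > |b + c|) :
    ∀ r σ ω : ℝ, 0 ≤ r → 0 ≤ σ → ω ≠ 0 →
      (Complex.I * ω + a + b * Complex.exp (-(Complex.I * ω) * r)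
        + c * Complex.exp (-(Complex.I * ω) * σ)) ≠ 0 := by
  intro r σ ω hr hσ hω heq
  have h1 : (-(Complex.I * ω) * r : ℂ) = ((-(ω*r):ℝ):ℂ) * Complex.I := by
    push_cast; ring
  have h2 : (-(Complex.I * ω) * σ : ℂ) = ((-(ω*σ):ℝ):ℂ) * Complex.I := by
    push_cast; ring
  rw [h1, h2, Complex.exp_mul_I, Complex.exp_mul_I] at heq
  have hre := congrArg Complex.re heq
  have him := congrArg Complex.im heq
  simp only [← Complex.ofReal_cos, ← Complex.ofReal_sin, Complex.add_re,
    Complex.add_im, Complex.mul_re, Complex.mul_im, Complex.I_re, Complex.I_im,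
    Complex.ofReal_re, Complex.ofReal_im, Complex.zero_re, Complex.zero_im,
    Real.cos_neg, Real.sin_neg] at hre him
  ring_nf at hre him
  have p1 := Real.sin_sq_add_cos_sq (ω*r)
  have p2 := Real.sin_sq_add_cos_sq (ω*σ)
  have hcc : (Real.cos (ω*r) - Real.cos (ω*σ))^2 + (Real.sin (ω*r) - Real.sin (ω*σ))^2 ≥ 0 := by positivity
  have ha2 : (b+c)^2 < a^2 := by
    have h0 : |b+c| ≥ 0 := abs_nonneg _
    nlinarith [sq_abs a, sq_abs (b+c)]
  have hω2 : 0 < ω^2 := by positivity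
  have ea : a = -(b*Real.cos (ω*r) + c*Real.cos (ω*σ)) := by linarith
  have eω : ω = b*Real.sin (ω*r) + c*Real.sin (ω*σ) := by linarith
  have key : a^2 + ω^2 = b^2 + c^2
      + 2*b*c*(Real.cos (ω*r)*Real.cos (ω*σ) + Real.sin (ω*r)*Real.sin (ω*σ)) := by
    linear_combination (a - b*Real.cos (ω*r) - c*Real.cos (ω*σ))*hre
      + (ω + b*Real.sin (ω*r) + c*Real.sin (ω*σ))*him + b^2*p1 + c^2*p2
  nlinarith [key, ha2, hω2, hbc, hcc, p1, p2]
end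

section
/- Let a, b, c be real numbers with a + b + c > 0 and bc < 0, and suppose |a| ≥ |b − c|. Then the characteristic function h(λ) = λ + a + b·e^{−λr} + c·e^{−λσ} has no purely imaginary zero λ = iω with ω ≠ 0, for any delays r ≥ 0 and σ ≥ 0. -/
theorem stmt_8 (a b c : ℝ) (hsum : 0 < a + b + c) (hbc : b * c < 0)
    (ha : |a| ≥ |b - c|) :
    ∀ r σ ω : ℝ, 0 ≤ r → 0 ≤ σ → ω ≠ 0 →
      (Complex.I * ω + a + b * Complex.exp (-(Complex.I * ω) * r)
        + c * Complex.exp (-(Complex.I * ω) * σ)) ≠ 0 := by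
  intro r σ ω hr hσ hω h
  have h1 := congrArg Complex.re h
  have h2 := congrArg Complex.im h
  simp [Complex.exp_re, Complex.exp_im, Complex.add_re, Complex.add_im,
    Complex.mul_re, Complex.mul_im, Complex.I_re, Complex.I_im,
    Complex.ofReal_re, Complex.ofReal_im, Complex.neg_re, Complex.neg_im] at h1 h2
  set c1 := Real.cos (ω * r) with hc1
  set c2 := Real.cos (ω * σ) with hc2
  set s1 := Real.sin (ω * r) with hs1
  set s2 := Real.sin (ω * σ) with hs2
  have ha2 : (b - c)^2 ≤ a^2 := by
    nlinarith [sq_abs a, sq_abs (b - c), mul_self_le_mul_self (abs_nonneg (b - c)) ha]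
  have p1 : s1 ^ 2 + c1 ^ 2 = 1 := Real.sin_sq_add_cos_sq (ω * r)
  have p2 : s2 ^ 2 + c2 ^ 2 = 1 := Real.sin_sq_add_cos_sq (ω * σ)
  have hω2 : 0 < ω ^ 2 := by positivity
  have e1 : a = -(b * c1 + c * c2) := by linarith
  have e2 : ω = b * s1 + c * s2 := by linarith
  have key : ω ^ 2 + a ^ 2 = b ^ 2 + c ^ 2 + 2 * b * c * (c1 * c2 + s1 * s2) := by
    rw [e1, e2]; linear_combination b ^ 2 * p1 + c ^ 2 * p2
  have q1 : b * c * (s1 ^ 2 + c1 ^ 2) = b * c := by rw [p1]; ring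
  have q2 : b * c * (s2 ^ 2 + c2 ^ 2) = b * c := by rw [p2]; ring
  nlinarith [key, ha2, hω2, q1, q2,
    mul_nonpos_of_nonpos_of_nonneg hbc.le (sq_nonneg (c1 + c2)),
    mul_nonpos_of_nonpos_of_nonneg hbc.le (sq_nonneg (s1 + s2))]
end

section
/- Let ω > 0, τ ∈ ℝ, a, ω real with a² + ω² > 0, and b, c real. Define u₁ = (bω·sin(ωτ) − a(c + b·cos(ωτ)))/(ω² + a²) and u₂ = (ab·sin(ωτ) + ω(c + b·cos(ωτ)))/(ω² + a²). If 2bc·cos(ωτ) + b² + c² = ω² + a², then u₁² + u₂² = 1, and hence there exists σ̄ ∈ [0, 2π/ω) with cos(ωσ̄) = u₁ and sin(ωσ̄) = u₂. -/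
/-!
With `θ = ωτ`, one has `u₂ + i u₁ = (c + b e^{iθ}) / (ω + i a)`, whose squared
modulus is `(b² + 2bc cos θ + c²) / (ω² + a²)`. The hypothesis makes this `1`, so `(u₁, u₂)` lies on
the unit circle and is `(cos φ, sin φ)` for some `φ ∈ [0, 2π)`; then `σ̄ = φ / ω`.
-/

open Real Set

theorem sq_add_sq_eq_mul_of_cos_sin (a b c ω θ : ℝ) :
    (b * ω * sin θ - a * (c + b * cos θ)) ^ 2 + (a * b * sin θ + ω * (c + b * cos θ)) ^ 2 =
      (ω ^ 2 + a ^ 2) * (2 * b * c * cos θ + b ^ 2 + c ^ 2) := by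
  linear_combination (ω ^ 2 + a ^ 2) * b ^ 2 * sin_sq_add_cos_sq θ

theorem exists_mem_Ico_cos_sin_eq {x y : ℝ} (h : x ^ 2 + y ^ 2 = 1) :
    ∃ φ ∈ Ico 0 (2 * π), cos φ = x ∧ sin φ = y := by
  set z : ℂ := ⟨x, y⟩
  have hz : ‖z‖ = 1 := by
    rw [← pow_eq_one_iff_of_nonneg (norm_nonneg z) two_ne_zero, Complex.sq_norm, Complex.normSq_mk]
    linear_combination h
  refine ⟨toIcoMod two_pi_pos 0 (Complex.arg z), by simpa using toIcoMod_mem_Ico' two_pi_pos _,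
    ?_, ?_⟩
  · rw [← self_sub_toIcoDiv_zsmul, cos_periodic.sub_zsmul_eq]
    simpa [hz] using Complex.norm_mul_cos_arg z
  · rw [← self_sub_toIcoDiv_zsmul, sin_periodic.sub_zsmul_eq]
    simpa [hz] using Complex.norm_mul_sin_arg z

theorem exists_mem_Ico_cos_mul_sin_mul_eq {x y ω : ℝ} (hω : 0 < ω) (h : x ^ 2 + y ^ 2 = 1) :
    ∃ σ ∈ Ico 0 (2 * π / ω), cos (ω * σ) = x ∧ sin (ω * σ) = y := by
  obtain ⟨φ, ⟨hφ₀, hφ⟩, hcos, hsin⟩ := exists_mem_Ico_cos_sin_eq h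
  refine ⟨φ / ω, ⟨by positivity, div_lt_div_of_pos_right hφ hω⟩, ?_, ?_⟩ <;>
    rwa [mul_div_cancel₀ _ hω.ne']

theorem stmt_18_general (a b c τ ω : ℝ) (hω : 0 < ω)
    (h : 2 * b * c * Real.cos (ω * τ) + b ^ 2 + c ^ 2 = ω ^ 2 + a ^ 2) :
    let u₁ : ℝ := (b * ω * Real.sin (ω * τ) - a * (c + b * Real.cos (ω * τ))) / (ω ^ 2 + a ^ 2)
    let u₂ : ℝ := (a * b * Real.sin (ω * τ) + ω * (c + b * Real.cos (ω * τ))) / (ω ^ 2 + a ^ 2)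
    u₁ ^ 2 + u₂ ^ 2 = 1 ∧
    ∃ σ ∈ Set.Ico (0 : ℝ) (2 * Real.pi / ω), Real.cos (ω * σ) = u₁ ∧ Real.sin (ω * σ) = u₂ := by
  intro u₁ u₂
  have hunit : u₁ ^ 2 + u₂ ^ 2 = 1 := by
    rw [div_pow, div_pow, ← add_div, sq_add_sq_eq_mul_of_cos_sin, h, ← sq,
      div_self (by positivity)]
  exact ⟨hunit, exists_mem_Ico_cos_mul_sin_mul_eq hω hunit⟩

theorem stmt_18 (a b c τ ω : ℝ) (hω : 0 < ω) (h0 : 0 < a ^ 2 + ω ^ 2)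
    (h : 2 * b * c * Real.cos (ω * τ) + b ^ 2 + c ^ 2 = ω ^ 2 + a ^ 2) :
    let u₁ : ℝ := (b * ω * Real.sin (ω * τ) - a * (c + b * Real.cos (ω * τ))) / (ω ^ 2 + a ^ 2)
    let u₂ : ℝ := (a * b * Real.sin (ω * τ) + ω * (c + b * Real.cos (ω * τ))) / (ω ^ 2 + a ^ 2)
    u₁ ^ 2 + u₂ ^ 2 = 1 ∧
    ∃ σ ∈ Set.Ico (0 : ℝ) (2 * Real.pi / ω), Real.cos (ω * σ) = u₁ ∧ Real.sin (ω * σ) = u₂ :=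
  stmt_18_general a b c τ ω hω h
end
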